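/- Let b be a holomorphic map of the open unit disk 𝔻 ⊂ ℂ into itself. Then the kernel (z,w) ↦ ((1 + |b(0)|)/(1 − |b(0)|)) · 1/(1 − z·conj(w)) − 1/(1 − b(z)·conj(b(w))) is positive semidefinite on 𝔻. (This is the kernel form of the bound ‖C_b‖² ≤ (1+|b(0)|)/(1−|b(0)|) on H².) -/

import Mathlib

/-!
Let `a = b 0`, `ψ = φ_a ∘ b` with `φ_a` the Möbius involution of the disc exchanging `a` and `0`,
and `F = (1 - ā b)⁻¹`. The transformation rule of the Szegő kernel `k` under `φ_a` gives
`k(b z, b w) = (1 - |a|²) F(z) conj F(w) k(ψ z, ψ w)`, hence, with `M = (1 + |a|)/(1 - |a|)`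
and `g = (1 - |a|) F`,
`M k(z, w) - k(b z, b w)
  = M (1 - g(z) conj g(w)) k(z, w) + (1 - |a|²) F(z) conj F(w) (k(z, w) - k(ψ z, ψ w))`.
As `|g| ≤ 1`, the first kernel is PSD by Pick's positivity, which follows from Cauchy's formula on
the circle. As `ψ 0 = 0`, Schwarz's lemma writes `ψ(z) = z s(z)` with `|s| ≤ 1`, and then
`k(z, w) - k(ψ z, ψ w) = z conj w · (1 - s(z) conj s(w)) k(z, w) · k(ψ z, ψ w)`, a Schur product
of PSD kernels (expand `k(ψ z, ψ w)` as a geometric series).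
-/

open Complex Metric ComplexConjugate
open scoped ComplexOrder

noncomputable section

/-- A kernel `K : X → X → ℂ` is positive semidefinite on a set `S`: for all finite
families of points of `S` and scalars, the associated quadratic form is a
nonnegative real number (using the partial order on `ℂ`). -/
def IsPSDKernelOn {X : Type*} (K : X → X → ℂ) (S : Set X) : Prop :=
  ∀ (n : ℕ) (x : Fin n → X), (∀ i, x i ∈ S) → ∀ c : Fin n → ℂ,
    0 ≤ ∑ i, ∑ j, c i * conj (c j) * K (x i) (x j)

open Filter Topology intervalIntegral
open scoped Real

namespace IsPSDKernelOn

variable {X : Type*} {S : Set X} {K L : X → X → ℂ}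

theorem congr (hK : IsPSDKernelOn K S) (h : ∀ z ∈ S, ∀ w ∈ S, K z w = L z w) :
    IsPSDKernelOn L S := by
  intro n x hx c
  convert hK n x hx c using 4 with i _ j _
  rw [h _ (hx i) _ (hx j)]

theorem add (hK : IsPSDKernelOn K S) (hL : IsPSDKernelOn L S) :
    IsPSDKernelOn (fun z w => K z w + L z w) S := by
  intro n x hx c
  simpa only [mul_add, Finset.sum_add_distrib] using add_nonneg (hK n x hx c) (hL n x hx c)

theorem ofReal_mul (hK : IsPSDKernelOn K S) {r : ℝ} (hr : 0 ≤ r) :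
    IsPSDKernelOn (fun z w => (r : ℂ) * K z w) S := by
  intro n x hx c
  simpa only [Finset.mul_sum, mul_left_comm] using
    mul_nonneg (Complex.zero_le_real.2 hr) (hK n x hx c)

theorem mul_conj (hK : IsPSDKernelOn K S) (f : X → ℂ) :
    IsPSDKernelOn (fun z w => f z * conj (f w) * K z w) S := by
  intro n x hx c
  convert hK n x hx (fun i => c i * f (x i)) using 3 with i _ j _
  simp only [map_mul]
  ring

theorem tsum {K : ℕ → X → X → ℂ} (hK : ∀ m, IsPSDKernelOn (K m) S)
    (hsum : ∀ z ∈ S, ∀ w ∈ S, Summable fun m => K m z w) :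
    IsPSDKernelOn (fun z w => ∑' m, K m z w) S := by
  intro n x hx c
  have hsum' : ∀ i j, Summable fun m => c i * conj (c j) * K m (x i) (x j) :=
    fun i j => (hsum _ (hx i) _ (hx j)).mul_left _
  calc (0 : ℂ) ≤ ∑' m, ∑ i, ∑ j, c i * conj (c j) * K m (x i) (x j) :=
        tsum_nonneg fun m => hK m n x hx c
    _ = ∑ i, ∑ j, c i * conj (c j) * ∑' m, K m (x i) (x j) := by
        rw [Summable.tsum_finsetSum fun i _ => summable_sum fun j _ => hsum' i j]
        refine Finset.sum_congr rfl fun i _ => ?_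
        rw [Summable.tsum_finsetSum fun j _ => hsum' i j]
        simp only [tsum_mul_left]

theorem of_tendsto {ι : Type*} {l : Filter ι} [l.NeBot] {K : ι → X → X → ℂ}
    (hK : ∀ᶠ r in l, IsPSDKernelOn (K r) S)
    (hlim : ∀ z ∈ S, ∀ w ∈ S, Tendsto (fun r => K r z w) l (𝓝 (L z w))) :
    IsPSDKernelOn L S := by
  intro n x hx c
  refine ge_of_tendsto (tendsto_finsetSum _ fun i _ => tendsto_finsetSum _ fun j _ =>
    (hlim _ (hx i) _ (hx j)).const_mul _) ?_
  filter_upwards [hK] with r hr using hr n x hx c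

end IsPSDKernelOn

def szegoKernel (z w : ℂ) : ℂ := (1 - z * conj w)⁻¹

theorem one_sub_ne_zero_of_norm_lt_one {R : Type*} [NormedRing R] [NormOneClass R] {x : R}
    (hx : ‖x‖ < 1) : 1 - x ≠ 0 :=
  sub_ne_zero.2 fun h => by simp [← h] at hx

theorem norm_mul_conj_lt_one {z w : ℂ} (hz : ‖z‖ < 1) (hw : ‖w‖ ≤ 1) : ‖z * conj w‖ < 1 := by
  rw [norm_mul, RCLike.norm_conj]
  exact mul_lt_one_of_nonneg_of_lt_one_left (norm_nonneg z) hz hw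

theorem szegoKernel_eq_tsum {z w : ℂ} (hz : ‖z‖ < 1) (hw : ‖w‖ < 1) :
    szegoKernel z w = ∑' m, z ^ m * conj (w ^ m) := by
  simp only [map_pow, ← mul_pow]
  exact (tsum_geometric_of_norm_lt_one (norm_mul_conj_lt_one hz hw.le)).symm

theorem IsPSDKernelOn.mul_szegoKernel_comp {X : Type*} {S : Set X} {K : X → X → ℂ}
    (hK : IsPSDKernelOn K S) {φ : X → ℂ} (hφ : ∀ z ∈ S, ‖φ z‖ < 1) :
    IsPSDKernelOn (fun z w => K z w * szegoKernel (φ z) (φ w)) S := by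
  refine (IsPSDKernelOn.tsum (fun m => hK.mul_conj fun z => φ z ^ m) fun z hz w hw => ?_).congr
    fun z hz w hw => ?_
  · simp only [map_pow, ← mul_pow]
    exact (summable_geometric_of_norm_lt_one
      (norm_mul_conj_lt_one (hφ z hz) (hφ w hw).le)).mul_right _
  · rw [szegoKernel_eq_tsum (hφ z hz) (hφ w hw), ← tsum_mul_left]
    simp only [mul_comm (K z w)]

section Pick

theorem szegoKernel_circleMap (z : ℂ) (θ : ℝ) :
    szegoKernel z (circleMap 0 1 θ) = circleMap 0 1 θ * (circleMap 0 1 θ - z)⁻¹ := by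
  have hu : ‖circleMap 0 1 θ‖ = 1 := by simp [norm_circleMap_zero]
  have hu0 : circleMap 0 1 θ ≠ 0 := norm_ne_zero_iff.1 (by simp [hu])
  rw [szegoKernel, ← RCLike.inv_eq_conj hu,
    show 1 - z * (circleMap 0 1 θ)⁻¹ = (circleMap 0 1 θ - z) * (circleMap 0 1 θ)⁻¹ by
      field_simp,
    mul_inv, inv_inv, mul_comm]

theorem continuous_szegoKernel_circleMap {z : ℂ} (hz : ‖z‖ < 1) :
    Continuous fun θ => szegoKernel z (circleMap 0 1 θ) :=
  (continuous_const.sub (continuous_const.mul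
    (continuous_conj.comp (continuous_circleMap 0 1)))).inv₀ fun θ =>
      one_sub_ne_zero_of_norm_lt_one
        (norm_mul_conj_lt_one hz (by simp [norm_circleMap_zero]))

theorem DiffContOnCl.continuous_comp_circleMap {f : ℂ → ℂ} (hf : DiffContOnCl ℂ f (ball 0 1)) :
    Continuous fun θ => f (circleMap 0 1 θ) :=
  hf.continuousOn.comp_continuous (continuous_circleMap 0 1) fun θ => by
    simp [closure_ball, norm_circleMap_zero]

/-- Cauchy's formula, written over the parameter of the unit circle. -/
theorem integral_mul_szegoKernel_circleMap {f : ℂ → ℂ} (hf : DiffContOnCl ℂ f (ball 0 1))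
    {z w : ℂ} (hz : ‖z‖ < 1) (hw : ‖w‖ < 1) :
    ∫ θ in (0 : ℝ)..2 * π, f (circleMap 0 1 θ) *
        (szegoKernel z (circleMap 0 1 θ) * conj (szegoKernel w (circleMap 0 1 θ))) =
      2 * π * (f z * szegoKernel z w) := by
  have hden : ∀ u ∈ closure (ball (0 : ℂ) 1), 1 - conj w * u ≠ 0 := fun u hu => by
    have := norm_mul_conj_lt_one hw (by simpa [closure_ball] using hu)
    rw [← RCLike.norm_conj, map_mul, conj_conj] at this
    exact one_sub_ne_zero_of_norm_lt_one this
  have hg : DiffContOnCl ℂ (fun u => f u • (1 - conj w * u)⁻¹) (ball 0 1) :=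
    hf.smul ((diffContOnCl_const.sub
      ((differentiable_const _).mul differentiable_id).diffContOnCl).inv hden)
  have hcauchy := hg.circleIntegral_sub_inv_smul (mem_ball_zero_iff.2 hz)
  simp only [circleIntegral, deriv_circleMap, smul_eq_mul] at hcauchy
  calc ∫ θ in (0 : ℝ)..2 * π, f (circleMap 0 1 θ) *
        (szegoKernel z (circleMap 0 1 θ) * conj (szegoKernel w (circleMap 0 1 θ)))
      = ∫ θ in (0 : ℝ)..2 * π, -I * (circleMap 0 1 θ * I * ((circleMap 0 1 θ - z)⁻¹ *
          (f (circleMap 0 1 θ) * (1 - conj w * circleMap 0 1 θ)⁻¹))) := by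
        refine integral_congr fun θ _ => ?_
        rw [szegoKernel_circleMap]
        simp only [szegoKernel, map_inv₀, map_sub, map_one, map_mul, conj_conj]
        linear_combination f (circleMap 0 1 θ) * circleMap 0 1 θ * (circleMap 0 1 θ - z)⁻¹ *
          (1 - conj w * circleMap 0 1 θ)⁻¹ * I_sq
    _ = 2 * π * (f z * szegoKernel z w) := by
        rw [integral_const_mul, hcauchy, szegoKernel, mul_comm z]
        linear_combination -2 * π * (f z * (1 - conj w * z)⁻¹) * I_sq

theorem integral_mul_sum_szegoKernel_circleMap {f : ℂ → ℂ} (hf : DiffContOnCl ℂ f (ball 0 1))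
    {n : ℕ} {x : Fin n → ℂ} (hx : ∀ i, ‖x i‖ < 1) (d e : Fin n → ℂ) :
    ∫ θ in (0 : ℝ)..2 * π, f (circleMap 0 1 θ) *
        ((∑ i, d i * szegoKernel (x i) (circleMap 0 1 θ)) *
          conj (∑ j, e j * szegoKernel (x j) (circleMap 0 1 θ))) =
      2 * π * ∑ i, ∑ j, d i * conj (e j) * (f (x i) * szegoKernel (x i) (x j)) := by
  have hcont : ∀ i j, Continuous fun θ => d i * conj (e j) * (f (circleMap 0 1 θ) *
      (szegoKernel (x i) (circleMap 0 1 θ) * conj (szegoKernel (x j) (circleMap 0 1 θ)))) :=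
    fun i j => continuous_const.mul (hf.continuous_comp_circleMap.mul
      ((continuous_szegoKernel_circleMap (hx i)).mul
        (continuous_conj.comp (continuous_szegoKernel_circleMap (hx j)))))
  calc _ = ∫ θ in (0 : ℝ)..2 * π, ∑ i, ∑ j, d i * conj (e j) * (f (circleMap 0 1 θ) *
        (szegoKernel (x i) (circleMap 0 1 θ) * conj (szegoKernel (x j) (circleMap 0 1 θ)))) := by
        refine integral_congr fun θ _ => ?_
        simp only [map_sum, map_mul]
        rw [Finset.sum_mul_sum, Finset.mul_sum]
        simp only [Finset.mul_sum]
        refine Finset.sum_congr rfl fun i _ => Finset.sum_congr rfl fun j _ => ?_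
        ring
    _ = _ := by
        rw [integral_finsetSum fun i _ =>
            (continuous_finsetSum _ fun j _ => hcont i j).intervalIntegrable _ _,
          Finset.mul_sum]
        refine Finset.sum_congr rfl fun i _ => ?_
        rw [integral_finsetSum fun j _ => (hcont i j).intervalIntegrable _ _, Finset.mul_sum]
        refine Finset.sum_congr rfl fun j _ => ?_
        rw [integral_const_mul, integral_mul_szegoKernel_circleMap hf (hx i) (hx j)]
        ring

theorem integral_mul_conj_sub_add_nonneg {σ G H : ℝ → ℂ} (hσ : Continuous σ)
    (hG : Continuous G) (hH : Continuous H) (hσ1 : ∀ θ, ‖σ θ‖ ≤ 1) {a b : ℝ} (hab : a ≤ b) :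
    0 ≤ (∫ θ in a..b, G θ * conj (G θ)) - (∫ θ in a..b, σ θ * (G θ * conj (H θ))) -
      conj (∫ θ in a..b, σ θ * (G θ * conj (H θ))) + ∫ θ in a..b, H θ * conj (H θ) := by
  have hGG : Continuous fun θ => G θ * conj (G θ) := hG.mul (continuous_conj.comp hG)
  have hHH : Continuous fun θ => H θ * conj (H θ) := hH.mul (continuous_conj.comp hH)
  have hσGH : Continuous fun θ => σ θ * (G θ * conj (H θ)) :=
    hσ.mul (hG.mul (continuous_conj.comp hH))
  have hconj : Continuous fun θ => conj (σ θ * (G θ * conj (H θ))) := continuous_conj.comp hσGH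
  rw [← intervalIntegral_conj, ← integral_sub, ← integral_sub, ← integral_add]
  all_goals try refine Continuous.intervalIntegrable ?_ _ _
  · rw [integral_congr
      (g := fun θ => (((1 - ‖σ θ‖ ^ 2) * ‖G θ‖ ^ 2 + ‖σ θ * G θ - H θ‖ ^ 2 : ℝ) : ℂ)) fun θ _ => ?_, intervalIntegral.integral_ofReal, zero_le_real]
    · refine integral_nonneg hab fun θ _ => ?_
      have : 0 ≤ 1 - ‖σ θ‖ ^ 2 := by nlinarith [norm_nonneg (σ θ), hσ1 θ]
      positivity
    · push_cast
      simp only [← mul_conj', map_sub, map_mul, conj_conj]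
      ring
  exacts [(hGG.sub hσGH).sub hconj, hHH, hGG.sub hσGH, hconj, hGG, hσGH]

theorem isPSDKernelOn_pick_of_diffContOnCl {s : ℂ → ℂ} (hs : DiffContOnCl ℂ s (ball 0 1))
    (hs1 : ∀ θ : ℝ, ‖s (circleMap 0 1 θ)‖ ≤ 1) :
    IsPSDKernelOn (fun z w => (1 - s z * conj (s w)) * szegoKernel z w) (ball 0 1) := by
  intro n x hx c
  have hx' : ∀ i, ‖x i‖ < 1 := fun i => mem_ball_zero_iff.1 (hx i)
  set G : ℝ → ℂ := fun θ => ∑ i, c i * szegoKernel (x i) (circleMap 0 1 θ)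
  set H : ℝ → ℂ := fun θ => ∑ i, c i * s (x i) * szegoKernel (x i) (circleMap 0 1 θ)
  set A := ∑ i, ∑ j, c i * conj (c j) * szegoKernel (x i) (x j)
  set B := ∑ i, ∑ j, c i * s (x i) * conj (c j * s (x j)) * szegoKernel (x i) (x j)
  have hGG : ∫ θ in (0 : ℝ)..2 * π, G θ * conj (G θ) = 2 * π * A := by
    simpa only [one_mul] using
      integral_mul_sum_szegoKernel_circleMap (f := fun _ => 1) diffContOnCl_const hx' c c
  have hHH : ∫ θ in (0 : ℝ)..2 * π, H θ * conj (H θ) = 2 * π * B := by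
    simpa only [one_mul] using
      integral_mul_sum_szegoKernel_circleMap (f := fun _ => 1) diffContOnCl_const hx'
        (fun i => c i * s (x i)) (fun i => c i * s (x i))
  -- `H` is the projection of `s G` onto the span of the boundary kernels, so `⟪s G, H⟫ = ‖H‖²`.
  have hsGH : ∫ θ in (0 : ℝ)..2 * π, s (circleMap 0 1 θ) * (G θ * conj (H θ)) = 2 * π * B := by
    rw [integral_mul_sum_szegoKernel_circleMap hs hx' c fun i => c i * s (x i)]
    congr 1
    refine Finset.sum_congr rfl fun i _ => Finset.sum_congr rfl fun j _ => ?_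
    ring
  have hB : conj (2 * π * B) = 2 * π * B := by
    rw [← hHH, ← intervalIntegral_conj]
    refine integral_congr fun θ _ => ?_
    simp only [map_mul, conj_conj, mul_comm]
  have hcont : ∀ d : Fin n → ℂ,
      Continuous fun θ => ∑ i, d i * szegoKernel (x i) (circleMap 0 1 θ) :=
    fun d => continuous_finsetSum _ fun i _ =>
      continuous_const.mul (continuous_szegoKernel_circleMap (hx' i))
  have hAB := integral_mul_conj_sub_add_nonneg hs.continuous_comp_circleMap (hcont c)
    (hcont fun i => c i * s (x i)) hs1 Real.two_pi_pos.le
  rw [hGG, hHH, hsGH, hB, show 2 * π * A - 2 * π * B - 2 * π * B + 2 * π * B =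
    2 * π * (A - B) by ring] at hAB
  have h2π : (0 : ℂ) < 2 * π := by exact_mod_cast Real.two_pi_pos
  convert (le_of_mul_le_mul_left (by rwa [mul_zero]) h2π : 0 ≤ A - B) using 1
  rw [← Finset.sum_sub_distrib]
  refine Finset.sum_congr rfl fun i _ => ?_
  rw [← Finset.sum_sub_distrib]
  refine Finset.sum_congr rfl fun j _ => ?_
  rw [map_mul]
  ring

theorem isPSDKernelOn_pick {s : ℂ → ℂ} (hs : DifferentiableOn ℂ s (ball 0 1))
    (hs1 : Set.MapsTo s (ball 0 1) (closedBall 0 1)) :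
    IsPSDKernelOn (fun z w => (1 - s z * conj (s w)) * szegoKernel z w) (ball 0 1) := by
  have hdil : ∀ r ∈ Set.Ioo (0 : ℝ) 1, ∀ z ∈ closedBall (0 : ℂ) 1, (r : ℂ) * z ∈ ball 0 1 := by
    intro r hr z hz
    rw [mem_ball_zero_iff, norm_mul, norm_real, Real.norm_of_nonneg hr.1.le]
    exact mul_lt_one_of_nonneg_of_lt_one_left hr.1.le hr.2 (mem_closedBall_zero_iff.1 hz)
  have hlim : ∀ z ∈ ball (0 : ℂ) 1, Tendsto (fun r : ℝ => s (r * z)) (𝓝[<] 1) (𝓝 (s z)) := by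
    intro z hz
    have hrz : Tendsto (fun r : ℝ => (r : ℂ) * z) (𝓝 1) (𝓝 z) :=
      (continuous_ofReal.mul continuous_const).tendsto' 1 z (by simp)
    exact ((hs.continuousOn.continuousAt (isOpen_ball.mem_nhds hz)).tendsto.comp hrz).mono_left
      nhdsWithin_le_nhds
  refine IsPSDKernelOn.of_tendsto (l := 𝓝[<] (1 : ℝ))
    (K := fun r z w => (1 - s (r * z) * conj (s (r * w))) * szegoKernel z w) ?_
    fun z hz w hw => ?_
  · filter_upwards [Ioo_mem_nhdsLT zero_lt_one] with r hr
    refine isPSDKernelOn_pick_of_diffContOnCl (s := fun z => s (r * z)) ?_ fun θ => ?_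
    · refine DifferentiableOn.diffContOnCl ?_
      rw [closure_ball _ one_ne_zero]
      exact hs.comp (differentiableOn_id.const_mul _) fun z hz => hdil r hr z hz
    · exact mem_closedBall_zero_iff.1 (hs1 (hdil r hr _ (by simp [norm_circleMap_zero])))
  · exact (((hlim z hz).mul ((continuous_conj.tendsto _).comp (hlim w hw))).const_sub 1).mul_const _

end Pick

section Littlewood

theorem exists_eq_mul_of_mapsTo_ball {ψ : ℂ → ℂ} (hψ : DifferentiableOn ℂ ψ (ball 0 1))
    (hmaps : Set.MapsTo ψ (ball 0 1) (ball 0 1)) (h0 : ψ 0 = 0) :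
    ∃ s : ℂ → ℂ, DifferentiableOn ℂ s (ball 0 1) ∧ Set.MapsTo s (ball 0 1) (closedBall 0 1) ∧
      ∀ z, ψ z = z * s z := by
  refine ⟨dslope ψ 0,
    (Complex.differentiableOn_dslope (isOpen_ball.mem_nhds (mem_ball_self one_pos))).2 hψ,
    fun z hz => mem_closedBall_zero_iff.2 ?_, fun z => ?_⟩
  · simpa using Complex.norm_dslope_le_div_of_mapsTo_ball hψ
      (by rw [h0]; exact hmaps.mono_right ball_subset_closedBall) hz
  · simpa [h0] using (sub_smul_dslope ψ 0 z).symm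

theorem szegoKernel_sub_szegoKernel_mul {z w σ τ : ℂ} (h₁ : 1 - z * conj w ≠ 0)
    (h₂ : 1 - z * σ * conj (w * τ) ≠ 0) :
    szegoKernel z w - szegoKernel (z * σ) (w * τ) =
      z * conj w * ((1 - σ * conj τ) * szegoKernel z w) * szegoKernel (z * σ) (w * τ) := by
  simp only [szegoKernel]
  field_simp
  simp only [map_mul]
  ring

theorem isPSDKernelOn_szegoKernel_sub_comp {ψ : ℂ → ℂ} (hψ : DifferentiableOn ℂ ψ (ball 0 1))
    (hmaps : Set.MapsTo ψ (ball 0 1) (ball 0 1)) (h0 : ψ 0 = 0) :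
    IsPSDKernelOn (fun z w => szegoKernel z w - szegoKernel (ψ z) (ψ w)) (ball 0 1) := by
  obtain ⟨s, hs, hs1, hψs⟩ := exists_eq_mul_of_mapsTo_ball hψ hmaps h0
  have hψ1 : ∀ z ∈ ball (0 : ℂ) 1, ‖ψ z‖ < 1 := fun z hz => mem_ball_zero_iff.1 (hmaps hz)
  refine (((isPSDKernelOn_pick hs hs1).mul_conj id).mul_szegoKernel_comp hψ1).congr
    fun z hz w hw => ?_
  have h₁ := one_sub_ne_zero_of_norm_lt_one
    (norm_mul_conj_lt_one (mem_ball_zero_iff.1 hz) (mem_ball_zero_iff.1 hw).le)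
  have h₂ := one_sub_ne_zero_of_norm_lt_one (norm_mul_conj_lt_one (hψ1 z hz) (hψ1 w hw).le)
  rw [hψs z, hψs w] at h₂ ⊢
  rw [szegoKernel_sub_szegoKernel_mul h₁ h₂, id, id]

end Littlewood

section Mobius

def mobius (a z : ℂ) : ℂ := (a - z) * (1 - conj a * z)⁻¹

theorem mobius_self (a : ℂ) : mobius a a = 0 := by
  simp [mobius]

theorem one_sub_conj_mul_ne_zero {a z : ℂ} (ha : ‖a‖ < 1) (hz : ‖z‖ ≤ 1) : 1 - conj a * z ≠ 0 := by
  refine one_sub_ne_zero_of_norm_lt_one ?_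
  simpa [mul_comm] using norm_mul_conj_lt_one ha (w := conj z) (by simpa using hz)

theorem norm_mul_inv_one_sub_conj_mul_le_one {a z : ℂ} (ha : ‖a‖ < 1) (hz : ‖z‖ ≤ 1) :
    ‖((1 - ‖a‖ : ℝ) : ℂ) * (1 - conj a * z)⁻¹‖ ≤ 1 := by
  rw [norm_mul, norm_inv, norm_real, Real.norm_of_nonneg (by linarith), ← div_eq_mul_inv,
    div_le_one (norm_pos_iff.2 (one_sub_conj_mul_ne_zero ha hz))]
  calc 1 - ‖a‖ ≤ 1 - ‖conj a * z‖ := by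
        rw [norm_mul, RCLike.norm_conj]
        nlinarith [norm_nonneg a]
    _ ≤ ‖1 - conj a * z‖ := by simpa using norm_sub_norm_le 1 (conj a * z)

theorem one_sub_mobius_mul_conj_mobius {a z w : ℂ} (hz : 1 - conj a * z ≠ 0)
    (hw : 1 - conj a * w ≠ 0) :
    1 - mobius a z * conj (mobius a w) = ((1 - ‖a‖ ^ 2 : ℝ) : ℂ) * (1 - z * conj w) *
      ((1 - conj a * z)⁻¹ * conj (1 - conj a * w)⁻¹) := by
  have hz' : 1 - z * conj a ≠ 0 := by rwa [mul_comm]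
  have hw' : 1 - a * conj w ≠ 0 := by simpa using (map_ne_zero conj).2 hw
  simp only [mobius, map_mul, map_inv₀, map_sub, map_one, conj_conj]
  push_cast
  rw [← mul_conj']
  field_simp
  ring

theorem norm_mobius_lt_one {a z : ℂ} (ha : ‖a‖ < 1) (hz : ‖z‖ < 1) : ‖mobius a z‖ < 1 := by
  have hd := one_sub_conj_mul_ne_zero ha hz.le
  have key := one_sub_mobius_mul_conj_mobius hd hd
  rw [mul_conj', mul_conj', mul_conj'] at key
  have key' : 1 - ‖mobius a z‖ ^ 2 = (1 - ‖a‖ ^ 2) * (1 - ‖z‖ ^ 2) * ‖(1 - conj a * z)⁻¹‖ ^ 2 := by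
    exact_mod_cast key
  have hpos : 0 < (1 - ‖a‖ ^ 2) * (1 - ‖z‖ ^ 2) * ‖(1 - conj a * z)⁻¹‖ ^ 2 := by
    have : 0 < ‖(1 - conj a * z)⁻¹‖ := norm_pos_iff.2 (inv_ne_zero hd)
    have : ‖a‖ ^ 2 < 1 := by nlinarith [norm_nonneg a]
    have : ‖z‖ ^ 2 < 1 := by nlinarith [norm_nonneg z]
    apply mul_pos (mul_pos _ _) <;> nlinarith
  exact (sq_lt_one_iff₀ (norm_nonneg _)).1 (by linarith)

theorem differentiableOn_mobius {a : ℂ} (ha : ‖a‖ < 1) :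
    DifferentiableOn ℂ (mobius a) (ball 0 1) :=
  ((differentiableOn_const a).sub differentiableOn_id).mul
    (((differentiableOn_const 1).sub ((differentiableOn_const _).mul differentiableOn_id)).inv
      fun _ hz => one_sub_conj_mul_ne_zero ha (mem_ball_zero_iff.1 hz).le)

theorem mapsTo_mobius {a : ℂ} (ha : ‖a‖ < 1) : Set.MapsTo (mobius a) (ball 0 1) (ball 0 1) :=
  fun _ hz => mem_ball_zero_iff.2 (norm_mobius_lt_one ha (mem_ball_zero_iff.1 hz))

theorem szegoKernel_eq_mul_szegoKernel_mobius {a z w : ℂ} (ha : ‖a‖ < 1) (hz : ‖z‖ < 1)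
    (hw : ‖w‖ < 1) :
    szegoKernel z w = ((1 - ‖a‖ ^ 2 : ℝ) : ℂ) * ((1 - conj a * z)⁻¹ * conj (1 - conj a * w)⁻¹) *
      szegoKernel (mobius a z) (mobius a w) := by
  have hz' := one_sub_conj_mul_ne_zero ha hz.le
  have hw' := one_sub_conj_mul_ne_zero ha hw.le
  have hz'' : 1 - z * conj a ≠ 0 := by rwa [mul_comm]
  have hw'' : 1 - conj w * a ≠ 0 := by simpa [mul_comm] using (map_ne_zero conj).2 hw'
  have ha' : ((1 - ‖a‖ ^ 2 : ℝ) : ℂ) ≠ 0 := by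
    exact_mod_cast (by nlinarith [norm_nonneg a] : (1 - ‖a‖ ^ 2 : ℝ) ≠ 0)
  rw [szegoKernel, szegoKernel, one_sub_mobius_mul_conj_mobius hz' hw']
  simp only [map_inv₀, map_sub, map_one, map_mul, conj_conj]
  field_simp

end Mobius

/-- Kernel form of the bound `‖C_b‖² ≤ (1+|b(0)|)/(1−|b(0)|)` on `H²`:
the kernel `((1+|b(0)|)/(1−|b(0)|))·k(z,w) − k(b(z),b(w))` is positive
semidefinite, where `k` is the Szegő kernel. -/
theorem composition_norm_bound_kernel_psd
    (b : ℂ → ℂ)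
    (hb_holo : DifferentiableOn ℂ b (ball (0 : ℂ) 1))
    (hb_maps : ∀ z ∈ ball (0 : ℂ) 1, b z ∈ ball (0 : ℂ) 1) :
    IsPSDKernelOn
      (fun z w => (((1 + ‖b 0‖) / (1 - ‖b 0‖) : ℝ) : ℂ) * (1 - z * conj w)⁻¹ -
        (1 - b z * conj (b w))⁻¹)
      (ball (0 : ℂ) 1) := by
  set a := b 0
  have ha : ‖a‖ < 1 := mem_ball_zero_iff.1 (hb_maps 0 (mem_ball_self one_pos))
  have hb : ∀ z ∈ ball (0 : ℂ) 1, ‖b z‖ < 1 := fun z hz => mem_ball_zero_iff.1 (hb_maps z hz)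
  set F : ℂ → ℂ := fun z => (1 - conj a * b z)⁻¹
  have hF : DifferentiableOn ℂ F (ball 0 1) := ((hb_holo.const_mul _).const_sub 1).inv
    fun z hz => one_sub_conj_mul_ne_zero ha (hb z hz).le
  have hPick := isPSDKernelOn_pick (hF.const_mul ((1 - ‖a‖ : ℝ) : ℂ)) fun z hz =>
    mem_closedBall_zero_iff.2 (norm_mul_inv_one_sub_conj_mul_le_one ha (hb z hz).le)
  have hLittlewood := isPSDKernelOn_szegoKernel_sub_comp
    ((differentiableOn_mobius ha).comp hb_holo hb_maps) ((mapsTo_mobius ha).comp hb_maps)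
    (mobius_self a)
  have ha1 : (1 : ℝ) - ‖a‖ ≠ 0 := by linarith
  have hMT : (((1 + ‖a‖) / (1 - ‖a‖) : ℝ) : ℂ) * ((1 - ‖a‖ : ℝ) : ℂ) ^ 2 =
      ((1 - ‖a‖ ^ 2 : ℝ) : ℂ) := by
    push_cast
    field_simp
    ring
  have hM : 0 ≤ (1 + ‖a‖) / (1 - ‖a‖) := div_nonneg (by positivity) (by linarith)
  have hT : 0 ≤ 1 - ‖a‖ ^ 2 := by nlinarith [norm_nonneg a]
  refine ((hPick.ofReal_mul hM).add ((hLittlewood.mul_conj F).ofReal_mul hT)).congr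
    fun z hz w hw => ?_
  change _ = _ * szegoKernel z w - szegoKernel (b z) (b w)
  rw [szegoKernel_eq_mul_szegoKernel_mobius ha (hb z hz) (hb w hw)]
  simp only [map_mul, conj_ofReal, Function.comp]
  linear_combination -(F z * conj (F w) * szegoKernel z w) * hMT
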